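/- Let n be a positive integer, let ρ and σ be n×n positive definite complex matrices with trace 1, and let s > 0. For a unitary U write B_U = (U*σU)^{-1/2}. Then for every unitary U, Tr[ (U*σU) (B_U ρ B_U + sI)⁻¹ ] ≥ Σ_{i=1}^n λ↓ᵢ(σ)² / (λ↓ᵢ(ρ) + s·λ↓ᵢ(σ)), and equality holds for U = W↓ V↓*; hence this value is the minimum over the unitary group and it is attained at W↓ V↓*. -/

import Mathlib

/-!
With `τ = U*σU` and `B = τ^{-1/2}` one has `BρB + s = B(ρ + sτ)B`, so the objective equals
`Tr[τ²(ρ + sτ)⁻¹] = Tr τ / s - Tr[(ρ⁻¹ + (sτ)⁻¹)⁻¹] / s²` by the parallel-sum identity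
`(ρ⁻¹ + C⁻¹)⁻¹ = C - C(ρ + C)⁻¹C`. Minimising over `U` thus means maximising `Tr Z⁻¹` for
`Z = X + Y` with `X = ρ⁻¹`, `Y = (sτ)⁻¹` of fixed spectra `x = 1/r`, `y = 1/(sd)`, both increasing.

Write `Z = E diag(μ) E*` with `μ` increasing. In the basis `E`, the diagonal of `X` is `A x` for
the doubly stochastic matrix `A` of squared moduli of the entries of the unitary `E*P`, and
likewise for `Y`. By Birkhoff's theorem and the rearrangement inequality, the decreasing weights
`c = μ⁻²` satisfy `c ⬝ (x + y) ≤ c ⬝ (Ax + A'y) = c ⬝ μ`, and the tangent-line bound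
`1/μ - 1/w ≤ (w - μ)/μ²` turns this into `Σ 1/μⱼ ≤ Σ 1/(xⱼ + yⱼ)`. For `U = W V*`, `ρ` and `τ`
share the eigenbasis `V` and the bound is an equality.
-/

open Matrix
open scoped ComplexOrder Classical

/-- The positive semidefinite square root of a matrix (junk value `0` if the matrix is
not positive semidefinite). -/
noncomputable def msqrt {n : ℕ} (A : Matrix (Fin n) (Fin n) ℂ) : Matrix (Fin n) (Fin n) ℂ :=
  if h : A.PosSemidef then
    (h.1.eigenvectorUnitary : Matrix (Fin n) (Fin n) ℂ) *
      diagonal ((↑) ∘ (fun x : ℝ => Real.sqrt x) ∘ h.1.eigenvalues) *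
      (star h.1.eigenvectorUnitary : Matrix (Fin n) (Fin n) ℂ)
  else 0

variable {ι : Type*} [Fintype ι]

theorem inv_sub_inv_le_inv_sq_mul_sub {a b : ℝ} (ha : 0 < a) (hb : 0 < b) :
    a⁻¹ - b⁻¹ ≤ (a ^ 2)⁻¹ * (b - a) := by
  have h : (a ^ 2)⁻¹ * (b - a) - (a⁻¹ - b⁻¹) = (b - a) ^ 2 / (a ^ 2 * b) := by
    field_simp
  linarith [show 0 ≤ (b - a) ^ 2 / (a ^ 2 * b) by positivity]

theorem sum_sq_div_add_mul_eq {r d : ι → ℝ} {s : ℝ} (hr : ∀ i, 0 < r i) (hd : ∀ i, 0 < d i)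
    (hd1 : ∑ i, d i = 1) (hs : 0 < s) :
    ∑ i, d i ^ 2 / (r i + s * d i) = s⁻¹ - (s ^ 2)⁻¹ * ∑ i, ((r i)⁻¹ + (s * d i)⁻¹)⁻¹ := by
  have hterm : ∀ i, d i ^ 2 / (r i + s * d i)
      = s⁻¹ * d i - (s ^ 2)⁻¹ * ((r i)⁻¹ + (s * d i)⁻¹)⁻¹ := by
    intro i
    have := hr i
    have := hd i
    field_simp
    ring
  rw [Finset.sum_congr rfl fun i _ => hterm i, Finset.sum_sub_distrib, ← Finset.mul_sum,
    ← Finset.mul_sum, hd1, mul_one]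

variable [DecidableEq ι]

theorem dotProduct_le_dotProduct_mulVec_of_mem_doublyStochastic {A : Matrix ι ι ℝ}
    (hA : A ∈ doublyStochastic ℝ ι) {f g : ι → ℝ} (hfg : Antivary f g) :
    f ⬝ᵥ g ≤ f ⬝ᵥ (A *ᵥ g) := by
  obtain ⟨w, hw0, hw1, rfl⟩ := exists_eq_sum_perm_of_mem_doublyStochastic hA
  calc f ⬝ᵥ g = ∑ π, w π * (f ⬝ᵥ g) := by rw [← Finset.sum_mul, hw1, one_mul]
    _ ≤ ∑ π, w π * (f ⬝ᵥ (g ∘ π)) := by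
      gcongr with π
      · exact hw0 π
      · exact hfg.sum_mul_le_sum_mul_comp_perm
    _ = f ⬝ᵥ ((∑ π, w π • π.permMatrix ℝ) *ᵥ g) := by
      simp [sum_mulVec, dotProduct_sum, smul_mulVec, permMatrix_mulVec]

theorem map_normSq_mem_doublyStochastic {U : Matrix ι ι ℂ} (hU : U ∈ unitaryGroup ι ℂ) :
    U.map Complex.normSq ∈ doublyStochastic ℝ ι := by
  have hUU : U * Uᴴ = 1 := Unitary.mul_star_self_of_mem hU
  have hUU' : Uᴴ * U = 1 := Unitary.star_mul_self_of_mem hU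
  refine mem_doublyStochastic_iff_sum.2
    ⟨fun i j => Complex.normSq_nonneg _, fun i => ?_, fun j => ?_⟩
  · apply Complex.ofReal_injective
    simpa [mul_apply, Complex.star_def, Complex.mul_conj] using congrFun (congrFun hUU i) i
  · apply Complex.ofReal_injective
    simpa [mul_apply, Complex.star_def, Complex.conj_mul', Complex.normSq_eq_norm_sq] using
      congrFun (congrFun hUU' j) j

theorem mul_diagonal_mul_conjTranspose_apply_self (G : Matrix ι ι ℂ) (x : ι → ℝ) (j : ι) :
    (G * diagonal (fun i => (x i : ℂ)) * Gᴴ) j j = ((G.map Complex.normSq *ᵥ x) j : ℂ) := by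
  rw [mul_apply]
  simp only [mul_diagonal, conjTranspose_apply, mulVec, dotProduct, map_apply]
  push_cast
  refine Finset.sum_congr rfl fun m _ => ?_
  rw [Complex.normSq_eq_conj_mul_self, Complex.star_def]
  ring

def Diagonalizes (U A : Matrix ι ι ℂ) (f : ι → ℝ) : Prop :=
  U ∈ unitaryGroup ι ℂ ∧ Uᴴ * A * U = diagonal (fun i => (f i : ℂ))

namespace Diagonalizes

variable {U A B : Matrix ι ι ℂ} {f g : ι → ℝ}

theorem of_eq (hU : U ∈ unitaryGroup ι ℂ) (h : A = U * diagonal (fun i => (f i : ℂ)) * Uᴴ) :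
    Diagonalizes U A f := by
  have hUU : Uᴴ * U = 1 := Unitary.star_mul_self_of_mem hU
  refine ⟨hU, ?_⟩
  rw [h, ← mul_assoc, ← mul_assoc, hUU, one_mul, mul_assoc, hUU, mul_one]

theorem eq (h : Diagonalizes U A f) : A = U * diagonal (fun i => (f i : ℂ)) * Uᴴ := by
  have hUU : U * Uᴴ = 1 := Unitary.mul_star_self_of_mem h.1
  calc A = (U * Uᴴ) * A * (U * Uᴴ) := by rw [hUU, one_mul, mul_one]
    _ = U * (Uᴴ * A * U) * Uᴴ := by simp only [mul_assoc]
    _ = _ := by rw [h.2]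

theorem unique (hA : Diagonalizes U A f) (hB : Diagonalizes U B f) : A = B :=
  hA.eq.trans hB.eq.symm

theorem add (hA : Diagonalizes U A f) (hB : Diagonalizes U B g) :
    Diagonalizes U (A + B) (f + g) := by
  refine ⟨hA.1, ?_⟩
  rw [mul_add, add_mul, hA.2, hB.2, diagonal_add]
  simp

theorem mul (hA : Diagonalizes U A f) (hB : Diagonalizes U B g) :
    Diagonalizes U (A * B) (f * g) := by
  have hUU : U * Uᴴ = 1 := Unitary.mul_star_self_of_mem hA.1
  refine ⟨hA.1, ?_⟩
  calc Uᴴ * (A * B) * U = (Uᴴ * A * U) * (Uᴴ * B * U) := by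
        simp only [mul_assoc, ← mul_assoc U, hUU, one_mul]
    _ = _ := by rw [hA.2, hB.2, diagonal_mul_diagonal]; simp

theorem smul (hA : Diagonalizes U A f) (c : ℝ) : Diagonalizes U ((c : ℂ) • A) (c • f) := by
  refine ⟨hA.1, ?_⟩
  rw [Matrix.mul_smul, Matrix.smul_mul, hA.2, ← diagonal_smul]
  congr 1
  ext i
  simp

theorem inv (hA : Diagonalizes U A f) (hf : ∀ i, f i ≠ 0) : Diagonalizes U A⁻¹ f⁻¹ := by
  have hUinv : U⁻¹ = Uᴴ := inv_eq_left_inv (Unitary.star_mul_self_of_mem hA.1)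
  have hUHinv : Uᴴ⁻¹ = U := inv_eq_left_inv (Unitary.mul_star_self_of_mem hA.1)
  refine ⟨hA.1, ?_⟩
  calc Uᴴ * A⁻¹ * U = (Uᴴ * A * U)⁻¹ := by
        rw [Matrix.mul_inv_rev, Matrix.mul_inv_rev, hUinv, hUHinv, mul_assoc]
    _ = _ := by
      rw [hA.2]
      refine inv_eq_left_inv ?_
      rw [diagonal_mul_diagonal]
      simp [hf]

theorem conj (hA : Diagonalizes U A f) {G : Matrix ι ι ℂ} (hG : G ∈ unitaryGroup ι ℂ) :
    Diagonalizes (Gᴴ * U) (Gᴴ * A * G) f := by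
  have hGG : G * Gᴴ = 1 := Unitary.mul_star_self_of_mem hG
  refine ⟨mul_mem (Unitary.star_mem hG) hA.1, ?_⟩
  rw [← hA.2, conjTranspose_mul, conjTranspose_conjTranspose]
  simp only [mul_assoc, ← mul_assoc G, hGG, one_mul]

theorem conj_mul_conjTranspose (hA : Diagonalizes U A f) {V : Matrix ι ι ℂ}
    (hV : V ∈ unitaryGroup ι ℂ) : Diagonalizes V ((U * Vᴴ)ᴴ * A * (U * Vᴴ)) f := by
  have hUU : Uᴴ * U = 1 := Unitary.star_mul_self_of_mem hA.1
  have hVH : Vᴴ ∈ unitaryGroup ι ℂ := Unitary.star_mem hV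
  have hV' : (U * Vᴴ)ᴴ * U = V := by
    rw [conjTranspose_mul, conjTranspose_conjTranspose, mul_assoc, hUU, mul_one]
  simpa only [hV'] using hA.conj (mul_mem hA.1 hVH)

theorem reindex (hA : Diagonalizes U A f) (π : Equiv.Perm ι) :
    Diagonalizes (U.submatrix id π) A (f ∘ π) := by
  have hUU : Uᴴ * U = 1 := Unitary.star_mul_self_of_mem hA.1
  have hsub : ∀ M : Matrix ι ι ℂ, (U.submatrix id π)ᴴ * M * U.submatrix id π
      = (Uᴴ * M * U).submatrix π π := fun M => by
    rw [submatrix_mul _ _ _ id _ Function.bijective_id,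
      submatrix_mul _ _ _ id _ Function.bijective_id, submatrix_id_id, conjTranspose_submatrix]
  refine ⟨?_, ?_⟩
  · rw [mem_unitaryGroup_iff', star_eq_conjTranspose, ← mul_one (U.submatrix id π)ᴴ, hsub,
      mul_one, hUU, submatrix_one_equiv]
  · rw [hsub, hA.2, submatrix_diagonal_equiv]
    rfl

theorem trace (hA : Diagonalizes U A f) : A.trace = ∑ i, (f i : ℂ) := by
  have hUU : Uᴴ * U = 1 := Unitary.star_mul_self_of_mem hA.1
  rw [hA.eq, trace_mul_cycle, hUU, one_mul, trace_diagonal]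

theorem posDef_iff (hA : Diagonalizes U A f) : A.PosDef ↔ ∀ i, 0 < f i := by
  rw [← (Unitary.isUnit_coe (U := ⟨U, hA.1⟩)).posDef_star_left_conjugate_iff,
    star_eq_conjTranspose, hA.2]
  simp

theorem conjTranspose_mul_mul_apply_self {P X : Matrix ι ι ℂ} {x : ι → ℝ}
    (hX : Diagonalizes P X x) (E : Matrix ι ι ℂ) (j : ι) :
    (Eᴴ * X * E) j j = (((Eᴴ * P).map Complex.normSq *ᵥ x) j : ℂ) := by
  rw [← mul_diagonal_mul_conjTranspose_apply_self, hX.eq, conjTranspose_mul,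
    conjTranspose_conjTranspose]
  simp only [mul_assoc]

end Diagonalizes

theorem Matrix.IsHermitian.diagonalizes {A : Matrix ι ι ℂ} (hA : A.IsHermitian) :
    Diagonalizes hA.eigenvectorUnitary A hA.eigenvalues := by
  refine ⟨hA.eigenvectorUnitary.2, ?_⟩
  have := hA.conjStarAlgAut_star_eigenvectorUnitary
  simp only [Unitary.conjStarAlgAut_apply, Unitary.coe_star, star_star] at this
  exact this

theorem Matrix.IsHermitian.exists_diagonalizes_monotone {n : ℕ}
    {A : Matrix (Fin n) (Fin n) ℂ} (hA : A.IsHermitian) :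
    ∃ U f, Monotone f ∧ Diagonalizes U A f :=
  ⟨_, _, Tuple.monotone_sort _, hA.diagonalizes.reindex (Tuple.sort _)⟩

theorem diagonalizes_msqrt {n : ℕ} {A : Matrix (Fin n) (Fin n) ℂ} (hA : A.PosSemidef) :
    Diagonalizes hA.1.eigenvectorUnitary (msqrt A) (fun i => √(hA.1.eigenvalues i)) :=
  .of_eq hA.1.eigenvectorUnitary.2 (by rw [msqrt, dif_pos hA]; rfl)

theorem msqrt_mul_self {n : ℕ} {A : Matrix (Fin n) (Fin n) ℂ} (hA : A.PosSemidef) :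
    msqrt A * msqrt A = A := by
  refine ((diagonalizes_msqrt hA).mul (diagonalizes_msqrt hA)).unique ?_
  convert hA.1.diagonalizes using 1
  funext i
  exact Real.mul_self_sqrt (hA.eigenvalues_nonneg i)

theorem sum_inv_le_sum_inv_add [LinearOrder ι] {E P Q X Y : Matrix ι ι ℂ} {μ x y : ι → ℝ}
    (hZ : Diagonalizes E (X + Y) μ) (hX : Diagonalizes P X x) (hY : Diagonalizes Q Y y)
    (hμ : Monotone μ) (hx : Monotone x) (hy : Monotone y)
    (hμ0 : ∀ i, 0 < μ i) (hxy : ∀ i, 0 < x i + y i) :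
    ∑ i, (μ i)⁻¹ ≤ ∑ i, (x i + y i)⁻¹ := by
  set c : ι → ℝ := fun i => (μ i ^ 2)⁻¹
  have hc : Antitone c := fun i j hij =>
    inv_anti₀ (pow_pos (hμ0 i) 2) (pow_le_pow_left₀ (hμ0 i).le (hμ hij) 2)
  have hμ_eq : μ = (Eᴴ * P).map Complex.normSq *ᵥ x + (Eᴴ * Q).map Complex.normSq *ᵥ y := by
    funext j
    apply Complex.ofReal_injective
    have := congrFun (congrFun hZ.2 j) j
    rw [mul_add, add_mul, Matrix.add_apply, hX.conjTranspose_mul_mul_apply_self,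
      hY.conjTranspose_mul_mul_apply_self, diagonal_apply_eq] at this
    simp [this]
  have hcμ : c ⬝ᵥ (x + y) ≤ c ⬝ᵥ μ := by
    rw [hμ_eq, dotProduct_add, dotProduct_add]
    gcongr
    · exact dotProduct_le_dotProduct_mulVec_of_mem_doublyStochastic
        (map_normSq_mem_doublyStochastic (mul_mem (Unitary.star_mem hZ.1) hX.1)) (hc.antivary hx)
    · exact dotProduct_le_dotProduct_mulVec_of_mem_doublyStochastic
        (map_normSq_mem_doublyStochastic (mul_mem (Unitary.star_mem hZ.1) hY.1)) (hc.antivary hy)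
  have htangent : ∑ i, ((μ i)⁻¹ - (x i + y i)⁻¹) ≤ ∑ i, c i * ((x i + y i) - μ i) :=
    Finset.sum_le_sum fun i _ => inv_sub_inv_le_inv_sq_mul_sub (hμ0 i) (hxy i)
  simp only [Finset.sum_sub_distrib, mul_sub] at htangent
  simp only [dotProduct, Pi.add_apply] at hcμ
  linarith

theorem re_trace_inv_add_le {n : ℕ} {P Q X Y : Matrix (Fin n) (Fin n) ℂ} {x y : Fin n → ℝ}
    (hX : Diagonalizes P X x) (hY : Diagonalizes Q Y y) (hx : Monotone x) (hy : Monotone y)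
    (hx0 : ∀ i, 0 < x i) (hy0 : ∀ i, 0 < y i) :
    ((X + Y)⁻¹.trace).re ≤ ∑ i, (x i + y i)⁻¹ := by
  have hZ : (X + Y).PosDef := (hX.posDef_iff.2 hx0).add (hY.posDef_iff.2 hy0)
  obtain ⟨E, μ, hμ, hE⟩ := hZ.1.exists_diagonalizes_monotone
  have hμ0 := hE.posDef_iff.1 hZ
  rw [(hE.inv fun i => (hμ0 i).ne').trace]
  simpa using sum_inv_le_sum_inv_add hE hX hY hμ hx hy hμ0 fun i => add_pos (hx0 i) (hy0 i)

theorem re_trace_inv_add_inv_inv_le {n : ℕ} {P Q A C : Matrix (Fin n) (Fin n) ℂ}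
    {a c : Fin n → ℝ} (hA : Diagonalizes P A a) (hC : Diagonalizes Q C c)
    (ha : Antitone a) (hc : Antitone c) (ha0 : ∀ i, 0 < a i) (hc0 : ∀ i, 0 < c i) :
    ((A⁻¹ + C⁻¹)⁻¹.trace).re ≤ ∑ i, ((a i)⁻¹ + (c i)⁻¹)⁻¹ :=
  re_trace_inv_add_le (hA.inv fun i => (ha0 i).ne') (hC.inv fun i => (hc0 i).ne')
    (fun _ j hij => inv_anti₀ (ha0 j) (ha hij)) (fun _ j hij => inv_anti₀ (hc0 j) (hc hij))
    (fun i => inv_pos.2 (ha0 i)) (fun i => inv_pos.2 (hc0 i))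

theorem trace_inv_add_inv_inv_eq {P A C : Matrix ι ι ℂ} {a c : ι → ℝ}
    (hA : Diagonalizes P A a) (hC : Diagonalizes P C c) (ha0 : ∀ i, 0 < a i)
    (hc0 : ∀ i, 0 < c i) :
    (A⁻¹ + C⁻¹)⁻¹.trace = ((∑ i, ((a i)⁻¹ + (c i)⁻¹)⁻¹ : ℝ) : ℂ) := by
  have hsum := (hA.inv fun i => (ha0 i).ne').add (hC.inv fun i => (hc0 i).ne')
  rw [(hsum.inv fun i => (add_pos (inv_pos.2 (ha0 i)) (inv_pos.2 (hc0 i))).ne').trace]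
  simp

theorem inv_add_inv_inv_eq_sub {A C : Matrix ι ι ℂ} (hA : IsUnit A) (hC : IsUnit C)
    (hAC : IsUnit (A + C)) : (A⁻¹ + C⁻¹)⁻¹ = C - C * (A + C)⁻¹ * C := by
  have hAA : A⁻¹⁻¹ = A := nonsing_inv_nonsing_inv A ((isUnit_iff_isUnit_det A).1 hA)
  have hCC : C⁻¹⁻¹ = C := nonsing_inv_nonsing_inv C ((isUnit_iff_isUnit_det C).1 hC)
  have := add_mul_mul_inv_eq_sub C⁻¹ 1 A⁻¹ 1 (isUnit_nonsing_inv_iff.2 hC)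
    (isUnit_nonsing_inv_iff.2 hA) (by simpa [hAA, hCC])
  simpa [hAA, hCC, add_comm] using this

theorem trace_mul_inv_conj_add_smul_one {τ ρ S : Matrix ι ι ℂ} (hS : S * S = τ)
    (hτ : IsUnit τ) (c : ℂ) :
    (τ * (S⁻¹ * ρ * S⁻¹ + c • 1)⁻¹).trace = (τ * τ * (ρ + c • τ)⁻¹).trace := by
  have hSdet : IsUnit S.det :=
    (isUnit_iff_isUnit_det S).1 (isUnit_of_mul_isUnit_left (hS ▸ hτ))
  have hconj : S⁻¹ * ρ * S⁻¹ + c • 1 = S⁻¹ * (ρ + c • τ) * S⁻¹ := by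
    rw [mul_add, add_mul, ← hS, Matrix.mul_smul, Matrix.smul_mul, ← mul_assoc,
      nonsing_inv_mul _ hSdet, one_mul, mul_nonsing_inv _ hSdet]
  rw [hconj, Matrix.mul_inv_rev, Matrix.mul_inv_rev, nonsing_inv_nonsing_inv _ hSdet, ← hS]
  calc (S * S * (S * ((ρ + c • (S * S))⁻¹ * S))).trace
      = ((S * S * S * (ρ + c • (S * S))⁻¹) * S).trace := by simp only [mul_assoc]
    _ = (S * (S * S * S * (ρ + c • (S * S))⁻¹)).trace := trace_mul_comm _ _
    _ = _ := by simp only [mul_assoc]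

theorem trace_mul_inv_msqrt_conj_add_smul_one {n : ℕ} {ρ τ : Matrix (Fin n) (Fin n) ℂ}
    (hρ : ρ.PosDef) (hτ : τ.PosDef) {s : ℝ} (hs : 0 < s) :
    (τ * ((msqrt τ)⁻¹ * ρ * (msqrt τ)⁻¹ + (s : ℂ) • 1)⁻¹).trace
      = (s : ℂ)⁻¹ * τ.trace - ((s : ℂ) ^ 2)⁻¹ * (ρ⁻¹ + ((s : ℂ) • τ)⁻¹)⁻¹.trace := by
  have hsτ : ((s : ℂ) • τ).PosDef := hτ.smul (by exact_mod_cast hs)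
  have hs' : (s : ℂ) ≠ 0 := by exact_mod_cast hs.ne'
  rw [trace_mul_inv_conj_add_smul_one (msqrt_mul_self hτ.posSemidef) hτ.isUnit,
    inv_add_inv_inv_eq_sub hρ.isUnit hsτ.isUnit (hρ.add hsτ).isUnit]
  simp only [trace_sub, trace_smul, Matrix.smul_mul, Matrix.mul_smul, smul_eq_mul,
    trace_mul_cycle τ]
  field_simp
  ring

theorem stmt6_general (n : ℕ)
    (ρ σ : Matrix (Fin n) (Fin n) ℂ)
    (hρ : ρ.PosDef) (hσ : σ.PosDef)
    (hσtr : σ.trace = 1)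
    (s : ℝ) (hs : 0 < s)
    (r d : Fin n → ℝ) (hr : Antitone r) (hd : Antitone d)
    (V W : Matrix (Fin n) (Fin n) ℂ)
    (hV : V ∈ Matrix.unitaryGroup (Fin n) ℂ)
    (hW : W ∈ Matrix.unitaryGroup (Fin n) ℂ)
    (hVρ : Vᴴ * ρ * V = Matrix.diagonal (fun i => (r i : ℂ)))
    (hWσ : Wᴴ * σ * W = Matrix.diagonal (fun i => (d i : ℂ)))
    (B : Matrix (Fin n) (Fin n) ℂ → Matrix (Fin n) (Fin n) ℂ)
    (hB : ∀ U, B U = (msqrt (Uᴴ * σ * U))⁻¹) :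
    (∀ U ∈ Matrix.unitaryGroup (Fin n) ℂ,
        (∑ i, d i ^ 2 / (r i + s * d i)) ≤ (((Uᴴ * σ * U) * (B U * ρ * B U + (s : ℂ) • 1)⁻¹).trace).re) ∧
    (((W * Vᴴ)ᴴ * σ * (W * Vᴴ)) * (B (W * Vᴴ) * ρ * B (W * Vᴴ) + (s : ℂ) • 1)⁻¹).trace = ((∑ i, d i ^ 2 / (r i + s * d i) : ℝ) : ℂ) := by
  have hρV : Diagonalizes V ρ r := ⟨hV, hVρ⟩
  have hσW : Diagonalizes W σ d := ⟨hW, hWσ⟩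
  have hr0 := hρV.posDef_iff.1 hρ
  have hd0 := hσW.posDef_iff.1 hσ
  have hsd0 : ∀ i, 0 < (s • d) i := fun i => mul_pos hs (hd0 i)
  have hd1 : ∑ i, (d i : ℂ) = 1 := hσW.trace.symm.trans hσtr
  have hsum := sum_sq_div_add_mul_eq hr0 hd0 (by exact_mod_cast hd1) hs
  have hobj : ∀ U, Diagonalizes (Uᴴ * W) (Uᴴ * σ * U) d →
      ((Uᴴ * σ * U) * (B U * ρ * B U + (s : ℂ) • 1)⁻¹).trace
        = (s : ℂ)⁻¹ - ((s : ℂ) ^ 2)⁻¹ * (ρ⁻¹ + ((s : ℂ) • (Uᴴ * σ * U))⁻¹)⁻¹.trace := by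
    intro U hU
    rw [hB, trace_mul_inv_msqrt_conj_add_smul_one hρ (hU.posDef_iff.2 hd0) hs, hU.trace, hd1,
      mul_one]
  refine ⟨fun U hU => ?_, ?_⟩
  · rw [hobj U (hσW.conj hU), hsum, ← Complex.ofReal_pow, ← Complex.ofReal_inv,
      ← Complex.ofReal_inv, Complex.sub_re, Complex.re_ofReal_mul, Complex.ofReal_re]
    gcongr
    exact re_trace_inv_add_inv_inv_le hρV ((hσW.conj hU).smul s) hr (hd.const_smul hs.le) hr0 hsd0
  · have hWV : W * Vᴴ ∈ unitaryGroup (Fin n) ℂ := mul_mem hW (Unitary.star_mem hV)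
    have hτ := hσW.conj_mul_conjTranspose hV
    rw [hobj _ (hσW.conj hWV),
      trace_inv_add_inv_inv_eq hρV (hτ.smul s) hr0 hsd0, hsum]
    simp

/-- unitary-orbit minimum of Tr[(U*σU)(B_UρB_U+sI)⁻¹], attained at W↓V↓*. -/
theorem stmt6 (n : ℕ) (hn : 0 < n)
    (ρ σ : Matrix (Fin n) (Fin n) ℂ)
    (hρ : ρ.PosDef) (hσ : σ.PosDef)
    (hρtr : ρ.trace = 1) (hσtr : σ.trace = 1)
    (s : ℝ) (hs : 0 < s)
    (r d : Fin n → ℝ) (hr : Antitone r) (hd : Antitone d)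
    (V W : Matrix (Fin n) (Fin n) ℂ)
    (hV : V ∈ Matrix.unitaryGroup (Fin n) ℂ)
    (hW : W ∈ Matrix.unitaryGroup (Fin n) ℂ)
    (hVρ : Vᴴ * ρ * V = Matrix.diagonal (fun i => (r i : ℂ)))
    (hWσ : Wᴴ * σ * W = Matrix.diagonal (fun i => (d i : ℂ)))
    (B : Matrix (Fin n) (Fin n) ℂ → Matrix (Fin n) (Fin n) ℂ)
    (hB : ∀ U, B U = (msqrt (Uᴴ * σ * U))⁻¹) :
    (∀ U ∈ Matrix.unitaryGroup (Fin n) ℂ,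
        (∑ i, d i ^ 2 / (r i + s * d i)) ≤ (((Uᴴ * σ * U) * (B U * ρ * B U + (s : ℂ) • 1)⁻¹).trace).re) ∧
    (((W * Vᴴ)ᴴ * σ * (W * Vᴴ)) * (B (W * Vᴴ) * ρ * B (W * Vᴴ) + (s : ℂ) • 1)⁻¹).trace = ((∑ i, d i ^ 2 / (r i + s * d i) : ℝ) : ℂ) :=
  stmt6_general n ρ σ hρ hσ hσtr s hs r d hr hd V W hV hW hVρ hWσ B hB
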